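/- arXiv:1510.07484 — 2 statements merged into one kernel-verified Lean document; each statement's English description precedes it below -/
import Mathlib

section
/- For natural numbers k, n with 0 < k < n, the identity (1/(k+1))·C(n,k)·C(n+1,k) = C(n,k)² − C(n,k−1)·C(n,k+1) holds, where C(n,k) denotes the binomial coefficient. Equivalently, (k+1)·(C(n,k)² − C(n,k−1)·C(n,k+1)) = C(n,k)·C(n+1,k). -/
/-! Both the ratio rule `C(n,j+1)·(j+1) = C(n,j)·(n−j)` (read in `ℤ`, where it holds for
every `j`) and Pascal's rule are linear in the binomial coefficients; with `k = m + 1` they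
express everything through `C(n,m)` and `C(n,m+1)`, and the identity becomes a polynomial one. -/

/-- Beyond `j = n` both sides vanish, so no bound on `j` is needed in `ℤ`. -/
theorem Nat.cast_choose_succ_right_eq (n j : ℕ) :
    (n.choose (j + 1) : ℤ) * (j + 1) = n.choose j * (n - j) := by
  rcases le_or_gt j n with hjn | hnj
  · have := congrArg (Nat.cast : ℕ → ℤ) (Nat.choose_succ_right_eq n j)
    push_cast [Nat.cast_sub hjn] at this
    exact this
  · simp [Nat.choose_eq_zero_of_lt hnj, Nat.choose_eq_zero_of_lt (Nat.lt_succ_of_lt hnj)]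

theorem stmt1_general (n k : ℕ) (hk : 0 < k) :
    ((k : ℤ) + 1) *
        ((n.choose k : ℤ) ^ 2 - (n.choose (k - 1) : ℤ) * (n.choose (k + 1) : ℤ))
      = (n.choose k : ℤ) * ((n + 1).choose k : ℤ) := by
  obtain ⟨m, rfl⟩ : ∃ m, k = m + 1 := ⟨k - 1, by omega⟩
  have ratio_m := Nat.cast_choose_succ_right_eq n m
  have ratio_succ := Nat.cast_choose_succ_right_eq n (m + 1)
  rw [Nat.add_sub_cancel, Nat.choose_succ_succ']
  push_cast at ratio_succ ⊢
  linear_combination (n.choose (m + 1) : ℤ) * ratio_m - (n.choose m : ℤ) * ratio_succ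

/-- For `0 < k < n`, `(k+1)·(C(n,k)² − C(n,k−1)·C(n,k+1)) = C(n,k)·C(n+1,k)`,
the denominator-free form of `(1/(k+1))·C(n,k)·C(n+1,k)
= C(n,k)² − C(n,k−1)·C(n,k+1)`. -/
theorem stmt1 (n k : ℕ) (hk : 0 < k) (hkn : k < n) :
    ((k : ℤ) + 1) *
        ((n.choose k : ℤ) ^ 2 - (n.choose (k - 1) : ℤ) * (n.choose (k + 1) : ℤ))
      = (n.choose k : ℤ) * ((n + 1).choose k : ℤ) :=
  stmt1_general n k hk
end

section
/- For all natural numbers n ≥ 2 and 1 ≤ k ≤ n−1, the determinant C(n,k)·C(n,k) − C(n,k−1)·C(n,k+1) of the 2×2 'diamond' of binomial coefficients is positive; in fact it equals the Narayana number (1/(k+1))·C(n,k)·C(n+1,k) ≥ 1. -/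
/-!
Write `a, b, c` for `C(n,k-1), C(n,k), C(n,k+1)`. The two absorption identities
`k·b = (n-k+1)·a` and `(k+1)·c = (n-k)·b`, together with Pascal's rule `C(n+1,k) = a + b`,
give `(k+1)(b² - a c) = b (a + b)` by linear algebra; the right-hand side is positive
for `1 ≤ k ≤ n`.
-/

namespace Nat

/-- Truncation-free form of `C(n,k+1)·(k+1) = C(n,k)·(n-k)`, valid for all `k`. -/
theorem choose_succ_mul_add_choose_mul (n k : ℕ) :
    n.choose (k + 1) * (k + 1) + n.choose k * k = n * n.choose k := by
  rw [choose_succ_right_eq, ← mul_add]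
  rcases le_or_gt k n with hkn | hnk
  · rw [Nat.sub_add_cancel hkn, mul_comm]
  · simp [choose_eq_zero_of_lt hnk]

theorem succ_mul_choose_diamond {n k : ℕ} (hk : 0 < k) :
    ((k : ℤ) + 1) * ((n.choose k : ℤ) * n.choose k - n.choose (k - 1) * n.choose (k + 1))
      = (n.choose k : ℤ) * ((n + 1).choose k : ℤ) := by
  obtain ⟨j, rfl⟩ := exists_add_one_eq.mpr hk
  have lower : (n.choose (j + 1) : ℤ) * (j + 1) + n.choose j * j = n * n.choose j := by
    exact_mod_cast choose_succ_mul_add_choose_mul n j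
  have upper : (n.choose (j + 2) : ℤ) * (j + 2) + n.choose (j + 1) * (j + 1)
      = n * n.choose (j + 1) := by
    exact_mod_cast choose_succ_mul_add_choose_mul n (j + 1)
  have pascal : ((n + 1).choose (j + 1) : ℤ) = n.choose j + n.choose (j + 1) := by
    exact_mod_cast choose_succ_succ' n j
  simp only [Nat.add_sub_cancel, pascal]
  push_cast
  linear_combination (n.choose (j + 1) : ℤ) * lower - (n.choose j : ℤ) * upper

theorem choose_diamond_pos {n k : ℕ} (hk : 0 < k) (hkn : k ≤ n) :
    0 < (n.choose k : ℤ) * n.choose k - n.choose (k - 1) * n.choose (k + 1) := by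
  have hprod : 0 < (n.choose k : ℤ) * ((n + 1).choose k : ℤ) := by
    have := choose_pos hkn
    have := choose_pos (hkn.trans n.le_succ)
    positivity
  rw [← succ_mul_choose_diamond hk] at hprod
  exact pos_of_mul_pos_right hprod (by positivity)

end Nat

theorem stmt13_general (n k : ℕ) (hk : 1 ≤ k) (hk' : k ≤ n - 1) :
    0 < (n.choose k : ℤ) * n.choose k - n.choose (k - 1) * n.choose (k + 1) ∧
    ((k : ℤ) + 1) *
        ((n.choose k : ℤ) * n.choose k - n.choose (k - 1) * n.choose (k + 1))
      = (n.choose k : ℤ) * ((n + 1).choose k : ℤ) ∧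
    1 ≤ (n.choose k : ℤ) * n.choose k - n.choose (k - 1) * n.choose (k + 1) := by
  have hpos := Nat.choose_diamond_pos hk (hk'.trans (n.sub_le 1))
  exact ⟨hpos, Nat.succ_mul_choose_diamond hk, hpos⟩

/-- For `n ≥ 2` and `1 ≤ k ≤ n−1`, the diamond determinant
`C(n,k)² − C(n,k−1)·C(n,k+1)` is positive, equals the Narayana number
`(1/(k+1))·C(n,k)·C(n+1,k)` (in denominator-free form), and is `≥ 1`. -/
theorem stmt13 (n k : ℕ) (hn : 2 ≤ n) (hk : 1 ≤ k) (hk' : k ≤ n - 1) :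
    0 < (n.choose k : ℤ) * n.choose k - n.choose (k - 1) * n.choose (k + 1) ∧
    ((k : ℤ) + 1) *
        ((n.choose k : ℤ) * n.choose k - n.choose (k - 1) * n.choose (k + 1))
      = (n.choose k : ℤ) * ((n + 1).choose k : ℤ) ∧
    1 ≤ (n.choose k : ℤ) * n.choose k - n.choose (k - 1) * n.choose (k + 1) :=
  stmt13_general n k hk hk'
end
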